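/- arXiv:1803.05721 — 3 statements merged into one kernel-verified Lean document; each statement's English description precedes it below -/
import Mathlib

section
/- Let R be a commutative ring and n ≥ 3. The image ∧²(E(n,R)) of the elementary subgroup E(n,R) under the exterior square homomorphism is a normal subgroup of the image ∧²(GL_n(R)) of the general linear group: ∧²(E(n,R)) ⊴ ∧²(GL_n(R)). -/
open Finset MvPolynomial Matrix

/-- `V n` is the set `∧²[n]` of 2-element subsets of `[n] = {1, …, n}`
(modelled on `Fin n`). -/
abbrev V (n : ℕ) := {I : Finset (Fin n) // I.card = 2}

/-- The variable `x_S` of the polynomial ring `R[x_I : I ∈ ∧²[n]]`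
(interpreted as `0` if `S` is not a 2-element set, a case which never occurs below). -/
noncomputable def var2 (R : Type*) [CommRing R] (n : ℕ) (S : Finset (Fin n)) :
    MvPolynomial (V n) R :=
  if h : S.card = 2 then MvPolynomial.X ⟨S, h⟩ else 0

/-- The Plücker polynomial `f_{i,J} = Σ_{h=1}^{3} (−1)^h x_{{i,j_h}} x_{J∖{j_h}}`,
where `J = {j₁ < j₂ < j₃}`; the exponent `h` is recovered as the number of elements
of `J` that are `≤ j_h`. -/
noncomputable def pluckerPoly (R : Type*) [CommRing R] (n : ℕ) (i : Fin n)
    (J : Finset (Fin n)) : MvPolynomial (V n) R :=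
  ∑ j ∈ J, ((-1 : ℤ) ^ (J.filter (fun a => a ≤ j)).card) •
    (var2 R n {i, j} * var2 R n (J.erase j))

/-- The Plücker ideal `Plu(n,R)`, generated by all Plücker polynomials. -/
noncomputable def pluIdeal (R : Type*) [CommRing R] (n : ℕ) :
    Ideal (MvPolynomial (V n) R) :=
  Ideal.span {p | ∃ (i : Fin n) (J : Finset (Fin n)), i ∉ J ∧ J.card = 3 ∧
    p = pluckerPoly R n i J}

/-- `sign(I,J)`: the sign of the permutation sorting the concatenation of the increasing
lists of `I` and of `J` into increasing order, computed as `(−1)^(number of inversions)`. -/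
def signIJ {n : ℕ} (I J : Finset (Fin n)) : ℤ :=
  (-1) ^ (((I ×ˢ J).filter (fun p => p.2 < p.1)).card)

/-- The smaller element of a 2-element subset. -/
def lo {n : ℕ} (I : V n) : Fin n :=
  I.1.min' (Finset.card_pos.mp (by rw [I.2]; norm_num))

/-- The larger element of a 2-element subset. -/
def hi {n : ℕ} (I : V n) : Fin n :=
  I.1.max' (Finset.card_pos.mp (by rw [I.2]; norm_num))

/-- The exterior square (Cauchy–Binet) of a matrix: the `N×N` matrix, indexed by
2-element subsets, whose entry at `({i₁<i₂},{j₁<j₂})` is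
`x_{i₁j₁}x_{i₂j₂} − x_{i₁j₂}x_{i₂j₁}`. -/
def wedge {R : Type*} [CommRing R] {n : ℕ} (x : Matrix (Fin n) (Fin n) R) :
    Matrix (V n) (V n) R :=
  fun I J => x (lo I) (lo J) * x (hi I) (hi J) - x (lo I) (hi J) * x (hi I) (lo J)

/-- The elementary transvection `t_{S,T}(ξ) = e + ξ·e_{S,T}` of `GL_N(R)`, for distinct
2-element subsets `S, T` (interpreted as the identity in the degenerate cases, which
never occur below). -/
def transvN (R : Type*) [CommRing R] (n : ℕ) (S T : Finset (Fin n)) (ξ : R) :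
    Matrix (V n) (V n) R :=
  if h : S.card = 2 ∧ T.card = 2 ∧ S ≠ T then
    1 + Matrix.single ⟨S, h.1⟩ ⟨T, h.2.1⟩ ξ
  else 1

/-- The exterior number `a_{A,C}^H(g) = Σ_{(B,D)} sign(B,D)·g_{A,B}·g_{C,D}`, the sum over
all ordered pairs `(B,D)` of disjoint 2-element subsets with `B ∪ D = H`. -/
def extNum {R : Type*} [CommRing R] {n : ℕ} (g : Matrix (V n) (V n) R)
    (H : Finset (Fin n)) (A C : V n) : R :=
  ∑ B : V n, ∑ D : V n,
    if B.1 ∩ D.1 = ∅ ∧ B.1 ∪ D.1 = H then (signIJ B.1 D.1 : R) * (g A B * g C D) else 0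

/-- The 4×4 minor `M_I^J(x)` with rows `I` and columns `J` (both 4-element sets). -/
noncomputable def minor4 {R : Type*} [CommRing R] {n : ℕ}
    (x : Matrix (Fin n) (Fin n) R) (I J : Finset (Fin n)) : R :=
  if h : I.card = 4 ∧ J.card = 4 then
    Matrix.det (Matrix.of fun a b : Fin 4 =>
      x ↑(I.orderIsoOfFin h.1 a) ↑(J.orderIsoOfFin h.2 b))
  else 0

/-- The elementary group `E(n,R)`: the subgroup of `GL_n(R)` generated by the elementary
transvections `t_{i,j}(ξ) = e + ξ·e_{i,j}`, `i ≠ j`. -/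
def elemGroup (R : Type*) [CommRing R] (n : ℕ) :
    Subgroup (Matrix.GeneralLinearGroup (Fin n) R) :=
  Subgroup.closure {x | ∃ (i j : Fin n) (ξ : R), i ≠ j ∧
    (x : Matrix (Fin n) (Fin n) R) = 1 + Matrix.single i j ξ}

/-- `g` satisfies the exterior-number conditions with witness `θ`. -/
def extCond {R : Type*} [CommRing R] {n : ℕ} (g : Matrix (V n) (V n) R)
    (θ : Finset (Fin n) → Finset (Fin n) → R) : Prop :=
  ∀ H : Finset (Fin n), H.card = 4 → ∀ A C : V n,
    (¬ Disjoint A.1 C.1 → extNum g H A C = 0) ∧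
    (Disjoint A.1 C.1 → extNum g H A C = (signIJ A.1 C.1 : R) * θ (A.1 ∪ C.1) H)

/-- The symmetric matrix `B_𝓘` with `(B_𝓘)_{M,L} = sign(M,L)` if `M ⊔ L = 𝓘`
and `0` otherwise. -/
def bMat (R : Type*) [CommRing R] (n : ℕ) (𝓘 : Finset (Fin n)) :
    Matrix (V n) (V n) R :=
  fun M L => if M.1 ∩ L.1 = ∅ ∧ M.1 ∪ L.1 = 𝓘 then (signIJ M.1 L.1 : R) else 0

/-! Suslin's normality theorem does the work: for `n ≥ 3`, `E(n,R)` is normal in `GL_n(R)`.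
A conjugate `x t_{ij}(ξ) x⁻¹` equals `1 + u vᵀ` with `u` unimodular (`c ⬝ u = 1`) and `v ⬝ u = 0`.
Then `v = Σ_{l,m} c_l v_m (u_l e_m − u_m e_l)`, each summand `w` satisfies `w ⬝ u = 0` and
vanishes at an index `k ∉ {l, m}`, and for such `w` the matrix `1 + u wᵀ` is a commutator of
elementary matrices times an elementary matrix.
Since `∧²` is multiplicative (Cauchy–Binet for `2 × 2` minors),
`∧²(x) ∧²(e) ∧²(x⁻¹) = ∧²(x e x⁻¹)`. -/

theorem one_add_mul_eq_commutator {A : Type*} [Ring A] {a b : A} (ha : a * a = 0)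
    (hb : b * b = 0) (hba : b * a = 0) :
    1 + a * b = (1 + a) * (1 + b) * (1 - a) * (1 - b) := by
  have hab : a * b * a = 0 := by rw [mul_assoc, hba, mul_zero]
  have habb : a * b * b = 0 := by rw [mul_assoc, hb, mul_zero]
  simp only [mul_add, add_mul, mul_sub, sub_mul, mul_one, one_mul, ha, hb, hba, hab, habb,
    zero_mul]
  abel

namespace Matrix

theorem vecMulVec_single_single {ι R : Type*} [DecidableEq ι] [MulZeroClass R] (i j : ι)
    (c d : R) :
    vecMulVec (Pi.single i c) (Pi.single j d) = single i j (c * d) := by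
  ext a b
  by_cases ha : a = i <;> by_cases hb : b = j <;>
    simp [vecMulVec_apply, ha, hb, Ne.symm]

section RankOne

variable {ι R : Type*} [Fintype ι] [DecidableEq ι] [Ring R]

theorem one_add_vecMulVec_add_left {u₁ u₂ v : ι → R} (h : v ⬝ᵥ u₂ = 0) :
    1 + vecMulVec (u₁ + u₂) v = (1 + vecMulVec u₁ v) * (1 + vecMulVec u₂ v) := by
  rw [add_vecMulVec, mul_add, add_mul, add_mul, vecMulVec_mul_vecMulVec, h, zero_smul,
    vecMulVec_zero]
  noncomm_ring

theorem one_add_vecMulVec_add_right {u v₁ v₂ : ι → R} (h : v₁ ⬝ᵥ u = 0) :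
    1 + vecMulVec u (v₁ + v₂) = (1 + vecMulVec u v₁) * (1 + vecMulVec u v₂) := by
  rw [vecMulVec_add, mul_add, add_mul, add_mul, vecMulVec_mul_vecMulVec, h, zero_smul,
    vecMulVec_zero]
  noncomm_ring

variable {κ : Type*} {M : Submonoid (Matrix ι ι R)} {s : Finset κ}

theorem one_add_vecMulVec_sum_left_mem {u : κ → ι → R} {v : ι → R}
    (hvu : ∀ a ∈ s, v ⬝ᵥ u a = 0) (hM : ∀ a ∈ s, 1 + vecMulVec (u a) v ∈ M) :
    1 + vecMulVec (∑ a ∈ s, u a) v ∈ M := by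
  classical
  induction s using Finset.induction_on with
  | empty => simp [M.one_mem]
  | insert a s ha ih =>
    simp only [Finset.forall_mem_insert] at hvu hM
    rw [Finset.sum_insert ha, one_add_vecMulVec_add_left
      (by rw [dotProduct_sum]; exact Finset.sum_eq_zero hvu.2)]
    exact M.mul_mem hM.1 (ih hvu.2 hM.2)

theorem one_add_vecMulVec_sum_right_mem {u : ι → R} {v : κ → ι → R}
    (hvu : ∀ a ∈ s, v a ⬝ᵥ u = 0) (hM : ∀ a ∈ s, 1 + vecMulVec u (v a) ∈ M) :
    1 + vecMulVec u (∑ a ∈ s, v a) ∈ M := by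
  classical
  induction s using Finset.induction_on with
  | empty => simp [M.one_mem]
  | insert a s ha ih =>
    simp only [Finset.forall_mem_insert] at hvu hM
    rw [Finset.sum_insert ha, one_add_vecMulVec_add_right hvu.1]
    exact M.mul_mem hM.1 (ih hvu.2 hM.2)

end RankOne

theorem single_sub_single_dotProduct_self {ι R : Type*} [Fintype ι] [DecidableEq ι]
    [CommRing R] (u : ι → R) (l m : ι) :
    (Pi.single m (u l) - Pi.single l (u m)) ⬝ᵥ u = 0 := by
  rw [sub_dotProduct, single_dotProduct, single_dotProduct, mul_comm, sub_self]

theorem sum_sum_smul_single_sub_single {ι R : Type*} [Fintype ι] [DecidableEq ι] [CommRing R]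
    {u v c : ι → R} (hcu : c ⬝ᵥ u = 1) (hvu : v ⬝ᵥ u = 0) :
    ∑ l, ∑ m, (c l * v m) • (Pi.single m (u l) - Pi.single l (u m)) = v := by
  ext b
  simp only [Finset.sum_apply, Pi.smul_apply, Pi.sub_apply, Pi.single_apply, smul_eq_mul,
    mul_sub, Finset.sum_sub_distrib, mul_ite, mul_zero, Finset.sum_ite_eq, Finset.mem_univ,
    if_true, Finset.sum_ite_irrel, Finset.sum_const_zero]
  have hcu' : ∑ x, c x * v b * u x = (c ⬝ᵥ u) * v b := by
    simp only [dotProduct, Finset.sum_mul, mul_right_comm _ (v b)]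
  have hvu' : ∑ x, c b * v x * u x = c b * (v ⬝ᵥ u) := by
    simp only [dotProduct, Finset.mul_sum, mul_assoc]
  rw [hcu', hvu', hcu, hvu, one_mul, mul_zero, sub_zero]

end Matrix

theorem Finset.sum_sum_eq_sum_filter_lt_add_swap {α M : Type*} [LinearOrder α] [Fintype α]
    [AddCommMonoid M] (f : α → α → M) (hf : ∀ a, f a a = 0) :
    ∑ a, ∑ b, f a b = ∑ p : α × α with p.1 < p.2, (f p.1 p.2 + f p.2 p.1) := by
  have hswap :
      ∑ p : α × α with p.1 < p.2, f p.2 p.1 = ∑ p : α × α with p.2 < p.1, f p.1 p.2 :=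
    Finset.sum_equiv (Equiv.prodComm α α) (by simp) fun _ _ => rfl
  have hgt :
      ∑ p : α × α with p.2 < p.1, f p.1 p.2 = ∑ p : α × α with ¬ p.1 < p.2, f p.1 p.2 := by
    refine Finset.sum_subset (fun p => by simpa using le_of_lt) fun p hp hp' => ?_
    simp only [Finset.mem_filter, Finset.mem_univ, true_and, not_lt] at hp hp'
    rw [le_antisymm hp' hp, hf]
  rw [Finset.sum_add_distrib, hswap, hgt, Finset.sum_filter_add_sum_filter_not,
    Fintype.sum_prod_type]

section Pairs

variable {n : ℕ}

theorem lo_lt_hi (K : V n) : lo K < hi K :=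
  Finset.min'_lt_max'_of_card _ (by rw [K.2]; norm_num)

theorem pair_lo_hi (K : V n) : {lo K, hi K} = K.1 := by
  refine Finset.eq_of_subset_of_card_le ?_ ?_
  · simp only [Finset.insert_subset_iff, Finset.singleton_subset_iff]
    exact ⟨Finset.min'_mem _ _, Finset.max'_mem _ _⟩
  · rw [K.2, Finset.card_pair (lo_lt_hi K).ne]

theorem lo_mk {k l : Fin n} (hkl : k < l) (h : ({k, l} : Finset (Fin n)).card = 2) :
    lo ⟨{k, l}, h⟩ = k := by
  simp [lo, hkl.le]

theorem hi_mk {k l : Fin n} (hkl : k < l) (h : ({k, l} : Finset (Fin n)).card = 2) :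
    hi ⟨{k, l}, h⟩ = l := by
  simp [hi, hkl.le]

theorem sum_lo_hi_eq_sum_filter_lt {M : Type*} [AddCommMonoid M] (g : Fin n → Fin n → M) :
    ∑ K : V n, g (lo K) (hi K) = ∑ p : Fin n × Fin n with p.1 < p.2, g p.1 p.2 := by
  refine Finset.sum_bij' (fun K _ => (lo K, hi K))
    (fun p hp => ⟨{p.1, p.2}, Finset.card_pair (Finset.mem_filter.mp hp).2.ne⟩)
    (fun K _ => by simpa using lo_lt_hi K) (fun _ _ => Finset.mem_univ _)
    (fun K _ => Subtype.ext (pair_lo_hi K)) (fun p hp => ?_) (fun K _ => rfl)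
  have h := (Finset.mem_filter.mp hp).2
  simp only [lo_mk h, hi_mk h]

end Pairs

theorem wedge_mul {R : Type*} [CommRing R] {n : ℕ} (x y : Matrix (Fin n) (Fin n) R) :
    wedge (x * y) = wedge x * wedge y := by
  ext I J
  set f : Fin n → Fin n → R := fun k l => x (lo I) k * x (hi I) l *
    (y k (lo J) * y l (hi J) - y k (hi J) * y l (lo J))
  have hexpand : wedge (x * y) I J = ∑ k, ∑ l, f k l := by
    simp only [wedge, mul_apply, Finset.sum_mul_sum, ← Finset.sum_sub_distrib, f]
    exact Finset.sum_congr rfl fun k _ => Finset.sum_congr rfl fun l _ => by ring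
  rw [hexpand, Finset.sum_sum_eq_sum_filter_lt_add_swap f fun k => by simp only [f]; ring,
    mul_apply, ← sum_lo_hi_eq_sum_filter_lt fun k l => f k l + f l k]
  refine Finset.sum_congr rfl fun p _ => ?_
  simp only [f, wedge]
  ring

def elemMatrices (R : Type*) [CommRing R] (n : ℕ) : Submonoid (Matrix (Fin n) (Fin n) R) :=
  (elemGroup R n).toSubmonoid.map (Units.coeHom _)

section Elementary

variable {R : Type*} [CommRing R] {n : ℕ}

namespace elemMatrices

theorem mem_elemGroup_of_coe_mem {g : GL (Fin n) R}
    (h : (g : Matrix (Fin n) (Fin n) R) ∈ elemMatrices R n) : g ∈ elemGroup R n := by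
  obtain ⟨g', hg', hg⟩ := Submonoid.mem_map.mp h
  rwa [← Units.ext hg]

theorem one_add_single_mem {i j : Fin n} {ξ : R} (h : i ≠ j ∨ ξ = 0) :
    1 + single i j ξ ∈ elemMatrices R n := by
  rcases h with hij | rfl
  · let t : GL (Fin n) R :=
      ⟨transvection i j ξ, transvection i j (-ξ),
        by rw [transvection_mul_transvection_same i j hij, add_neg_cancel, transvection_zero],
        by rw [transvection_mul_transvection_same i j hij, neg_add_cancel, transvection_zero]⟩
    exact ⟨t, Subgroup.subset_closure ⟨i, j, ξ, hij, rfl⟩, rfl⟩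
  · simp [(elemMatrices R n).one_mem]

theorem one_add_vecMulVec_single_right_mem {u : Fin n → R} {k : Fin n} (hu : u k = 0) (d : R) :
    1 + vecMulVec u (Pi.single k d) ∈ elemMatrices R n := by
  rw [← Finset.univ_sum_single u]
  refine one_add_vecMulVec_sum_left_mem (fun a _ => ?_) fun a _ => ?_
  · rcases eq_or_ne a k with rfl | hak
    · rw [hu, Pi.single_zero, dotProduct_zero]
    · rw [dotProduct_single, Pi.single_eq_of_ne hak, zero_mul]
  · rw [vecMulVec_single_single]
    exact one_add_single_mem ((ne_or_eq a k).imp_right fun h => by rw [h, hu, zero_mul])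

theorem one_add_vecMulVec_single_left_mem {v : Fin n → R} {k : Fin n} (hv : v k = 0) (c : R) :
    1 + vecMulVec (Pi.single k c) v ∈ elemMatrices R n := by
  rw [← Finset.univ_sum_single v]
  refine one_add_vecMulVec_sum_right_mem (fun a _ => ?_) fun a _ => ?_
  · rcases eq_or_ne a k with rfl | hak
    · rw [hv, Pi.single_zero, zero_dotProduct]
    · rw [single_dotProduct, Pi.single_eq_of_ne hak, mul_zero]
  · rw [vecMulVec_single_single]
    exact one_add_single_mem ((ne_or_eq k a).imp_right fun h => by rw [← h, hv, mul_zero])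

theorem one_add_vecMulVec_mem_of_apply_eq_zero {u v : Fin n → R} {k : Fin n}
    (hvu : v ⬝ᵥ u = 0) (hvk : v k = 0) : 1 + vecMulVec u v ∈ elemMatrices R n := by
  set s := u - Pi.single k (u k)
  have hsk : s k = 0 := by simp [s]
  have hvs : v ⬝ᵥ s = 0 := by
    rw [dotProduct_sub, hvu, dotProduct_single, hvk, zero_mul, sub_zero]
  have hcomm : 1 + vecMulVec s v =
      (1 + vecMulVec s (Pi.single k 1)) * (1 + vecMulVec (Pi.single k 1) v) *
        (1 + vecMulVec (-s) (Pi.single k 1)) * (1 + vecMulVec (Pi.single k 1) (-v)) := by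
    rw [neg_vecMulVec, vecMulVec_neg, ← sub_eq_add_neg, ← sub_eq_add_neg,
      ← one_add_mul_eq_commutator]
    all_goals simp only [vecMulVec_mul_vecMulVec, single_dotProduct, dotProduct_single, hsk, hvk,
      hvs, Pi.single_eq_same, mul_zero, mul_one, zero_smul, one_smul, vecMulVec_zero]
  rw [← sub_add_cancel u (Pi.single k (u k)), one_add_vecMulVec_add_left
    (by rw [dotProduct_single, hvk, zero_mul]), hcomm]
  refine mul_mem (mul_mem (mul_mem (mul_mem ?_ ?_) ?_) ?_) ?_
  · exact one_add_vecMulVec_single_right_mem hsk 1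
  · exact one_add_vecMulVec_single_left_mem hvk 1
  · exact one_add_vecMulVec_single_right_mem (by rw [Pi.neg_apply, hsk, neg_zero]) 1
  · exact one_add_vecMulVec_single_left_mem (by rw [Pi.neg_apply, hvk, neg_zero]) 1
  · exact one_add_vecMulVec_single_left_mem hvk (u k)

theorem one_add_vecMulVec_mem_of_dotProduct_eq_one (hn : 3 ≤ n) {u v c : Fin n → R}
    (hcu : c ⬝ᵥ u = 1) (hvu : v ⬝ᵥ u = 0) : 1 + vecMulVec u v ∈ elemMatrices R n := by
  have hdot : ∀ l m, ((c l * v m) • (Pi.single m (u l) - Pi.single l (u m))) ⬝ᵥ u = 0 :=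
    fun l m => by rw [smul_dotProduct, single_sub_single_dotProduct_self, smul_zero]
  rw [← sum_sum_smul_single_sub_single hcu hvu]
  refine one_add_vecMulVec_sum_right_mem
    (fun l _ => by rw [sum_dotProduct]; exact Finset.sum_eq_zero fun m _ => hdot l m)
    fun l _ => one_add_vecMulVec_sum_right_mem (fun m _ => hdot l m) fun m _ => ?_
  obtain ⟨k, hkl, hkm⟩ := Fin.exists_ne_and_ne_of_two_lt l m (by omega)
  refine one_add_vecMulVec_mem_of_apply_eq_zero (k := k) (hdot l m) ?_
  simp [hkl, hkm]

theorem mul_one_add_single_mul_mem (hn : 3 ≤ n) {x y : Matrix (Fin n) (Fin n) R}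
    (hxy : x * y = 1) (hyx : y * x = 1) {i j : Fin n} (hij : i ≠ j) (ξ : R) :
    x * (1 + single i j ξ) * y ∈ elemMatrices R n := by
  have hdot : ∀ a b : Fin n → R, (a ᵥ* y) ⬝ᵥ (x *ᵥ b) = a ⬝ᵥ b := fun a b => by
    rw [← dotProduct_mulVec, mulVec_mulVec, hyx, one_mulVec]
  have hconj : x * (1 + single i j ξ) * y =
      1 + vecMulVec (x *ᵥ Pi.single i 1) (Pi.single j ξ ᵥ* y) := by
    rw [← mul_vecMulVec, ← vecMulVec_mul, vecMulVec_single_single, one_mul, mul_add, add_mul,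
      mul_one, hxy, mul_assoc]
  rw [hconj]
  refine one_add_vecMulVec_mem_of_dotProduct_eq_one hn (c := Pi.single i 1 ᵥ* y) ?_ ?_
  · rw [hdot, single_dotProduct, Pi.single_eq_same, one_mul]
  · rw [hdot, single_dotProduct, Pi.single_eq_of_ne hij.symm, mul_zero]

end elemMatrices

theorem elemGroup_normal (hn : 3 ≤ n) : (elemGroup R n).Normal := by
  refine ⟨fun g hg x => ?_⟩
  suffices (elemGroup R n).map (MulAut.conj x).toMonoidHom ≤ elemGroup R n from this ⟨g, hg, rfl⟩
  rw [elemGroup, MonoidHom.map_closure, Subgroup.closure_le]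
  rintro _ ⟨s, ⟨i, j, ξ, hij, hs⟩, rfl⟩
  refine elemMatrices.mem_elemGroup_of_coe_mem ?_
  simpa [hs] using elemMatrices.mul_one_add_single_mul_mem hn x.mul_inv x.inv_mul hij ξ

end Elementary

/-- `∧²(E(n,R)) ⊴ ∧²(GL_n(R))`: conjugating the image of any element of the
elementary group `E(n,R)` under the exterior square homomorphism by the image of any
element of `GL_n(R)` lands again in the image of `E(n,R)`. -/
theorem stmt3 (R : Type*) [CommRing R] (n : ℕ) (hn : 3 ≤ n) :
    ∀ x : Matrix.GeneralLinearGroup (Fin n) R, ∀ e ∈ elemGroup R n,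
      ∃ e' ∈ elemGroup R n,
        wedge (x : Matrix (Fin n) (Fin n) R) * wedge (e : Matrix (Fin n) (Fin n) R) *
            wedge ((x⁻¹ : Matrix.GeneralLinearGroup (Fin n) R) : Matrix (Fin n) (Fin n) R) =
          wedge (e' : Matrix (Fin n) (Fin n) R) := by
  intro x e he
  refine ⟨x * e * x⁻¹, (elemGroup_normal hn).conj_mem e he x, ?_⟩
  rw [Units.val_mul, Units.val_mul, wedge_mul, wedge_mul]
end

section
/- Let R be a commutative ring, n ≥ 3, and 1 ≤ j < i ≤ n (so the transvection index pair is in the order i > j), ξ ∈ R. Then in GL_N(R) the exterior square of the elementary transvection decomposes as ∧²t_{i,j}(ξ) = ∏_{k=1}^{j−1} t_{{k,i},{k,j}}(ξ) · ∏_{l=j+1}^{i−1} t_{{l,i},{j,l}}(−ξ) · ∏_{m=i+1}^{n} t_{{i,m},{j,m}}(ξ). -/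
/-!
Each factor on the right is `1 + ε_c` with `ε_c = ±ξ e_{{c,i},{c,j}}`. Every column label
`{c,j}` contains `j` while no row label `{c',i}` does, so all products `ε_c ε_{c'}` vanish and
the product collapses to `1 + Σ_c ε_c`. On the left, the 2×2 minors of `1 + ξ e_{i,j}` differ
from those of the identity only at the positions `({c,i},{c,j})`, and there by `±ξ`.
-/

open Finset MvPolynomial Matrix

theorem Finset.pair_eq_pair_iff {α : Type*} [DecidableEq α] {a b c d : α} :
    ({a, b} : Finset α) = {c, d} ↔ a = c ∧ b = d ∨ a = d ∧ b = c := by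
  rw [← Finset.coe_inj, Finset.coe_pair, Finset.coe_pair, Set.pair_eq_pair_iff]

theorem Finset.pair_ne_pair_of_ne {α : Type*} [DecidableEq α] {a b c d : α} (hc : c ≠ b)
    (hd : d ≠ b) : ({a, b} : Finset α) ≠ {c, d} := by
  simp [Finset.pair_eq_pair_iff, hc.symm, hd.symm]

theorem List.prod_map_one_add_of_mul_eq_zero {α M : Type*} [Semiring M] (f : α → M) :
    ∀ l : List α, (∀ a ∈ l, ∀ b ∈ l, f a * f b = 0) →
      (l.map fun a => 1 + f a).prod = 1 + (l.map f).sum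
  | [], _ => by simp
  | a :: l, h => by
    have hl := List.prod_map_one_add_of_mul_eq_zero f l
      fun b hb c hc => h b (List.mem_cons_of_mem a hb) c (List.mem_cons_of_mem a hc)
    have ha : f a * (l.map f).sum = 0 := by
      rw [← List.sum_map_mul_left]
      exact List.sum_eq_zero fun x hx => by
        obtain ⟨b, hb, rfl⟩ := List.mem_map.mp hx
        exact h a List.mem_cons_self b (List.mem_cons_of_mem a hb)
    simp only [List.map_cons, List.prod_cons, List.sum_cons, hl]
    rw [add_mul, one_mul, mul_add, mul_one, ha]
    abel

theorem sum_filter_lt_add_between_add_gt {M : Type*} [AddCommMonoid M] {n : ℕ} {i j : Fin n}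
    (hji : j < i) (f : Fin n → M) :
    (((List.finRange n).filter (fun k => decide (k < j))).map f).sum +
        (((List.finRange n).filter (fun l => decide (j < l ∧ l < i))).map f).sum +
        (((List.finRange n).filter (fun m => decide (i < m))).map f).sum =
      ∑ c ∈ Finset.univ.filter (fun c => c ≠ i ∧ c ≠ j), f c := by
  simp only [← List.sum_toFinset _ ((List.nodup_finRange n).filter _), List.toFinset_filter,
    List.toFinset_finRange, decide_eq_true_eq]
  rw [Finset.sum_filter, Finset.sum_filter, Finset.sum_filter, Finset.sum_filter,
    ← Finset.sum_add_distrib, ← Finset.sum_add_distrib]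
  refine Finset.sum_congr rfl fun c _ => ?_
  split_ifs <;> first | omega | simp

section

variable {R : Type*} [CommRing R] {n : ℕ}

theorem lo_lt_hi_and_eq_pair (A : V n) : lo A < hi A ∧ A.1 = {lo A, hi A} := by
  obtain ⟨s, hs⟩ := A
  obtain ⟨x, y, hxy, rfl⟩ := Finset.card_eq_two.mp hs
  simp only [lo, hi, Finset.min'_pair, Finset.max'_pair]
  rcases hxy.lt_or_gt with h | h
  · simp [h.le, h]
  · simp [h.le, h, Finset.pair_comm]

-- `ξ • e_{S,T}` labelled by plain finsets, so that no cardinality proofs are carried;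
-- it is `0` unless `S` and `T` are 2-element sets.
def singleV (S T : Finset (Fin n)) (ξ : R) : Matrix (V n) (V n) R :=
  Matrix.of fun A B => if A.1 = S ∧ B.1 = T then ξ else 0

theorem transvN_eq_one_add_singleV {S T : Finset (Fin n)} (hS : S.card = 2) (hT : T.card = 2)
    (hST : S ≠ T) (ξ : R) : transvN R n S T ξ = 1 + singleV S T ξ := by
  rw [transvN, dif_pos ⟨hS, hT, hST⟩]
  congr 1
  ext A B
  simp only [Matrix.single_apply, singleV, Matrix.of_apply, Subtype.ext_iff, eq_comm]

theorem transvN_pair_eq_one_add_singleV {c i j : Fin n} (hci : c ≠ i) (hcj : c ≠ j)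
    (hij : i ≠ j) (ξ : R) : transvN R n {c, i} {c, j} ξ = 1 + singleV {c, i} {c, j} ξ :=
  transvN_eq_one_add_singleV (Finset.card_pair hci) (Finset.card_pair hcj)
    (Finset.pair_ne_pair_of_ne hcj hij).symm ξ

theorem singleV_mul_singleV_of_ne {S T S' T' : Finset (Fin n)} (h : T ≠ S') (a b : R) :
    singleV S T a * singleV S' T' b = 0 := by
  ext A B
  simp only [Matrix.mul_apply, singleV, Matrix.of_apply, Matrix.zero_apply]
  refine Finset.sum_eq_zero fun D _ => ?_
  split_ifs <;> simp_all

theorem wedge_one_add_single {i j : Fin n} (hji : j < i) (ξ : R) :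
    wedge (1 + Matrix.single i j ξ) =
      1 + ∑ c ∈ Finset.univ.filter (fun c => c ≠ i ∧ c ≠ j),
        singleV {c, i} {c, j} (if j < c ∧ c < i then -ξ else ξ) := by
  ext A B
  obtain ⟨hA, hAeq⟩ := lo_lt_hi_and_eq_pair A
  obtain ⟨hB, hBeq⟩ := lo_lt_hi_and_eq_pair B
  rw [Matrix.add_apply, Matrix.sum_apply, Finset.sum_filter,
    ← Finset.sum_subset (Finset.subset_univ {lo A, hi A}), Finset.sum_pair hA.ne]
  · simp only [wedge, singleV, Matrix.add_apply, Matrix.one_apply, Matrix.single_apply,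
      Matrix.of_apply, Subtype.ext_iff, hAeq, hBeq, Finset.pair_eq_pair_iff]
    clear hAeq hBeq
    generalize lo A = a, hi A = a', lo B = b, hi B = b' at *
    clear A B
    -- The sign is `-` exactly when `j < c < i`: then `c` is the larger element of `{j,c}` but the
    -- smaller one of `{c,i}`, so `ξ` sits on the anti-diagonal of the minor.
    grind (splits := 30)
  · intro c _ hc
    have hcA : A.1 ≠ {c, i} := fun h => hc (hAeq ▸ h ▸ Finset.mem_insert_self c {i})
    simp [singleV, hcA]

theorem transvN_prod_eq_one_add_sum {i j : Fin n} (hji : j < i) (ξ : R) :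
    (((List.finRange n).filter (fun k => decide (k < j))).map
          (fun k => transvN R n {k, i} {k, j} ξ)).prod *
      (((List.finRange n).filter (fun l => decide (j < l ∧ l < i))).map
          (fun l => transvN R n {l, i} {j, l} (-ξ))).prod *
      (((List.finRange n).filter (fun m => decide (i < m))).map
          (fun m => transvN R n {i, m} {j, m} ξ)).prod =
      1 + ∑ c ∈ Finset.univ.filter (fun c => c ≠ i ∧ c ≠ j),
        singleV {c, i} {c, j} (if j < c ∧ c < i then -ξ else ξ) := by
  have h₁ : ((List.finRange n).filter (fun k => decide (k < j))).map
      (fun k => transvN R n {k, i} {k, j} ξ) =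
      ((List.finRange n).filter (fun k => decide (k < j))).map
        (fun c => 1 + singleV {c, i} {c, j} (if j < c ∧ c < i then -ξ else ξ)) := by
    refine List.map_congr_left fun k hk => ?_
    have hk : k < j := by simpa using hk
    rw [transvN_pair_eq_one_add_singleV (by omega) (by omega) (by omega), if_neg (by omega)]
  have h₂ : ((List.finRange n).filter (fun l => decide (j < l ∧ l < i))).map
      (fun l => transvN R n {l, i} {j, l} (-ξ)) =
      ((List.finRange n).filter (fun l => decide (j < l ∧ l < i))).map
        (fun c => 1 + singleV {c, i} {c, j} (if j < c ∧ c < i then -ξ else ξ)) := by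
    refine List.map_congr_left fun l hl => ?_
    have hl : j < l ∧ l < i := by simpa using hl
    rw [Finset.pair_comm j l, transvN_pair_eq_one_add_singleV (by omega) (by omega) (by omega),
      if_pos hl]
  have h₃ : ((List.finRange n).filter (fun m => decide (i < m))).map
      (fun m => transvN R n {i, m} {j, m} ξ) =
      ((List.finRange n).filter (fun m => decide (i < m))).map
        (fun c => 1 + singleV {c, i} {c, j} (if j < c ∧ c < i then -ξ else ξ)) := by
    refine List.map_congr_left fun m hm => ?_
    have hm : i < m := by simpa using hm
    rw [Finset.pair_comm i m, Finset.pair_comm j m,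
      transvN_pair_eq_one_add_singleV (by omega) (by omega) (by omega), if_neg (by omega)]
  rw [h₁, h₂, h₃, ← List.prod_append, ← List.prod_append, ← List.map_append,
    ← List.map_append, List.prod_map_one_add_of_mul_eq_zero, List.map_append, List.map_append,
    List.sum_append, List.sum_append, sum_filter_lt_add_between_add_gt hji]
  intro a _ b hb
  have hb : b ≠ j := by
    simp only [List.mem_append, List.mem_filter, List.mem_finRange, true_and,
      decide_eq_true_eq] at hb
    omega
  exact singleV_mul_singleV_of_ne (Finset.pair_ne_pair_of_ne hb hji.ne') _ _

end

theorem stmt5_general (R : Type*) [CommRing R] (n : ℕ)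
    (i j : Fin n) (hji : j < i) (ξ : R) :
    wedge (1 + Matrix.single i j ξ) =
      (((List.finRange n).filter (fun k => decide (k < j))).map
          (fun k => transvN R n {k, i} {k, j} ξ)).prod *
      (((List.finRange n).filter (fun l => decide (j < l ∧ l < i))).map
          (fun l => transvN R n {l, i} {j, l} (-ξ))).prod *
      (((List.finRange n).filter (fun m => decide (i < m))).map
          (fun m => transvN R n {i, m} {j, m} ξ)).prod := by
  rw [transvN_prod_eq_one_add_sum hji, wedge_one_add_single hji]

/-- for `j < i`, the exterior square of an elementary transvection decomposes
as `∧²t_{i,j}(ξ) = ∏_{k<j} t_{{k,i},{k,j}}(ξ) · ∏_{j<l<i} t_{{l,i},{j,l}}(−ξ) ·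
∏_{i<m} t_{{i,m},{j,m}}(ξ)`. -/
theorem stmt5 (R : Type*) [CommRing R] (n : ℕ) (hn : 3 ≤ n)
    (i j : Fin n) (hji : j < i) (ξ : R) :
    wedge (1 + Matrix.single i j ξ) =
      (((List.finRange n).filter (fun k => decide (k < j))).map
          (fun k => transvN R n {k, i} {k, j} ξ)).prod *
      (((List.finRange n).filter (fun l => decide (j < l ∧ l < i))).map
          (fun l => transvN R n {l, i} {j, l} (-ξ))).prod *
      (((List.finRange n).filter (fun m => decide (i < m))).map
          (fun m => transvN R n {i, m} {j, m} ξ)).prod :=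
  stmt5_general R n i j hji ξ
end

section
/- Let R be a commutative ring, n ≥ 4, and let g, h be N×N matrices over R indexed by ∧²[n] that both satisfy the exterior-number conditions, with witnesses θ_g and θ_h respectively. Then for every H ∈ ∧⁴[n] and all disjoint A, C ∈ ∧²[n]: a_{A,C}^H(g·h) = sign(A,C) · Σ_{I ∈ ∧⁴[n]} θ_h(I, H) · θ_g(A∪C, I). -/
open Finset MvPolynomial Matrix

/-!
The exterior number is the quadratic form `a^H(g) = g · B_H · gᵀ` attached to the sign matrix
`B_H`, so `a^H(g h) = g · a^H(h) · gᵀ`. The conditions on `h` say exactly that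
`a^H(h) = Σ_I θ_h(I, H) · B_I`, and then `a^H(g h) = Σ_I θ_h(I, H) · a^I(g)`; the conditions on
`g` evaluate each `a^I(g)` at a disjoint pair `(A, C)`.
-/

section

variable {R : Type*} [CommRing R] {n : ℕ}

theorem extNum_eq_mul_bMat_mul_transpose (g : Matrix (V n) (V n) R) (H : Finset (Fin n))
    (A C : V n) : extNum g H A C = (g * bMat R n H * gᵀ) A C := by
  simp only [extNum, bMat, mul_apply, transpose_apply, sum_mul]
  rw [sum_comm]
  refine sum_congr rfl fun B _ => sum_congr rfl fun D _ => ?_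
  split_ifs <;> ring

theorem extNum_mul (g h : Matrix (V n) (V n) R) (H : Finset (Fin n)) (A C : V n) :
    extNum (g * h) H A C = (g * (h * bMat R n H * hᵀ) * gᵀ) A C := by
  rw [extNum_eq_mul_bMat_mul_transpose, transpose_mul]
  simp only [Matrix.mul_assoc]

theorem sum_smul_bMat_apply (c : Finset (Fin n) → R) (M L : V n) :
    (∑ I ∈ univ.filter (fun I : Finset (Fin n) => I.card = 4), c I • bMat R n I) M L =
      if Disjoint M.1 L.1 then (signIJ M.1 L.1 : R) * c (M.1 ∪ L.1) else 0 := by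
  simp only [Matrix.sum_apply, Matrix.smul_apply, bMat, ← disjoint_iff_inter_eq_empty,
    smul_eq_mul, mul_ite, mul_zero]
  split_ifs with hML
  · have hcard : (M.1 ∪ L.1).card = 4 := by rw [card_union_of_disjoint hML, M.2, L.2]
    rw [sum_eq_single_of_mem (M.1 ∪ L.1) (mem_filter.mpr ⟨mem_univ _, hcard⟩)
      fun I _ hI => if_neg fun h => hI h.2.symm, if_pos ⟨hML, rfl⟩, mul_comm]
  · exact sum_eq_zero fun I _ => if_neg fun h => hML h.1

theorem extCond.mul_bMat_mul_transpose_eq_sum {h : Matrix (V n) (V n) R}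
    {θ : Finset (Fin n) → Finset (Fin n) → R} (hθ : extCond h θ) {H : Finset (Fin n)}
    (hH : H.card = 4) :
    h * bMat R n H * hᵀ =
      ∑ I ∈ univ.filter (fun I : Finset (Fin n) => I.card = 4), θ I H • bMat R n I := by
  ext M L
  rw [← extNum_eq_mul_bMat_mul_transpose, sum_smul_bMat_apply]
  split_ifs with hML
  · exact (hθ H hH M L).2 hML
  · exact (hθ H hH M L).1 hML

end

theorem stmt12_general (R : Type*) [CommRing R] (n : ℕ)
    (g h : Matrix (V n) (V n) R) (θg θh : Finset (Fin n) → Finset (Fin n) → R)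
    (hg : extCond g θg) (hh : extCond h θh) :
    ∀ H : Finset (Fin n), H.card = 4 → ∀ A C : V n, Disjoint A.1 C.1 →
      extNum (g * h) H A C =
        (signIJ A.1 C.1 : R) *
          ∑ I ∈ Finset.univ.filter (fun I : Finset (Fin n) => I.card = 4),
            θh I H * θg (A.1 ∪ C.1) I := by
  intro H hH A C hAC
  rw [extNum_mul, hh.mul_bMat_mul_transpose_eq_sum hH, Matrix.mul_sum, Matrix.sum_mul,
    Matrix.sum_apply, mul_sum]
  refine sum_congr rfl fun I hI => ?_
  rw [Matrix.mul_smul, Matrix.smul_mul, Matrix.smul_apply, ← extNum_eq_mul_bMat_mul_transpose,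
    (hg I (mem_filter.mp hI).2 A C).2 hAC, smul_eq_mul]
  ring

/-- multiplicativity of exterior numbers: if `g` and `h` satisfy the
exterior-number conditions with witnesses `θg`, `θh`, then
`a_{A,C}^H(g·h) = sign(A,C) · Σ_{I ∈ ∧⁴[n]} θh(I,H)·θg(A∪C,I)`. -/
theorem stmt12 (R : Type*) [CommRing R] (n : ℕ) (hn : 4 ≤ n)
    (g h : Matrix (V n) (V n) R) (θg θh : Finset (Fin n) → Finset (Fin n) → R)
    (hg : extCond g θg) (hh : extCond h θh) :
    ∀ H : Finset (Fin n), H.card = 4 → ∀ A C : V n, Disjoint A.1 C.1 →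
      extNum (g * h) H A C =
        (signIJ A.1 C.1 : R) *
          ∑ I ∈ Finset.univ.filter (fun I : Finset (Fin n) => I.card = 4),
            θh I H * θg (A.1 ∪ C.1) I :=
  stmt12_general R n g h θg θh hg hh
end
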